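/- The function g(z) = −1/(z² log(e/|z|)) + 1/(2 z² log²(e/|z|)), which equals the Wirtinger derivative ∂f/∂z of f(z) = 1/(z log(e/|z|)) on the punctured unit disc, is not Lebesgue integrable on any punctured neighbourhood of the origin: for every r ∈ (0,1), ∫_{0<|z|<r} |g(z)| dA(z) = ∞. -/

import Mathlib

/-!
Writing `L = log(e/|z|)`, the function `log |z|` has Wirtinger derivative `1/(2z)`, so `∂L = -1/(2z)`
and the quotient rule gives `∂f = -(zL)⁻² (L - 1/2) = g`.

Since `L > 1`, `|g(z)| ≥ 1/(2|z|² L)`. On the annulus `r^(n+2) ≤ |z| < r^(n+1)` we have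
`L ≤ (n+2)(1 - log r)`, so `|g|` is at least a multiple of `r^(-2(n+1))/(n+2)`, while the annulus
has area `π(1 - r²) r^(2(n+1))`. Each annulus thus contributes a multiple of `1/(n+2)` to the
integral, and the harmonic series diverges.
-/

open Complex

noncomputable section

/-- `log(e/|z|) = 1 − log|z|`. -/
def Lg (z : ℂ) : ℝ := 1 - Real.log (‖z‖)

/-- The function `f(z) = 1/(z log(e/|z|))`. -/
def fEx (z : ℂ) : ℂ := (z * (Lg z : ℝ))⁻¹

open MeasureTheory

/-- The function `g(z) = −1/(z² log(e/|z|)) + 1/(2 z² log²(e/|z|))`. -/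
def gEx (z : ℂ) : ℂ := -(z ^ 2 * (Lg z : ℝ))⁻¹ + ((2 : ℂ) * z ^ 2 * ((Lg z ^ 2 : ℝ) : ℂ))⁻¹

open ComplexConjugate
open scoped ENNReal Function

-- For `D = a dz + b dz̄` this is the coefficient `a`.
def wirtinger : (ℂ →L[ℝ] ℂ) →ₗ[ℂ] ℂ where
  toFun D := (1 / 2 : ℂ) * (D 1 - I * D I)
  map_add' D E := by simp only [add_apply]; ring
  map_smul' c D := by simp only [smul_apply, smul_eq_mul, RingHom.id_apply]; ring

lemma wirtinger_apply (D : ℂ →L[ℝ] ℂ) : wirtinger D = (1 / 2 : ℂ) * (D 1 - I * D I) := rfl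

@[simp] lemma wirtinger_id : wirtinger (ContinuousLinearMap.id ℝ ℂ) = 1 := by
  simp [wirtinger_apply]; norm_num

lemma wirtinger_ofRealCLM_comp_innerSL (z : ℂ) :
    wirtinger (ofRealCLM.comp (innerSL ℝ z)) = conj z / 2 := by
  apply Complex.ext <;> simp [wirtinger_apply, Complex.inner] <;> ring

lemma hasFDerivAt_log_norm {E : Type*} [NormedAddCommGroup E] [InnerProductSpace ℝ E] {x : E}
    (hx : x ≠ 0) : HasFDerivAt (fun y => Real.log ‖y‖) ((‖x‖ ^ 2)⁻¹ • innerSL ℝ x) x := by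
  have h := ((hasStrictFDerivAt_norm_sq x).hasFDerivAt.log (by positivity)).const_mul (1 / 2 : ℝ)
  have hlog : (fun y : E => Real.log ‖y‖) = fun y => 1 / 2 * Real.log (‖y‖ ^ 2) := by
    funext y; rw [Real.log_pow]; push_cast; ring
  rw [hlog]
  refine h.congr_fderiv ?_
  ext y; simp; ring

lemma hasFDerivAt_ofReal_Lg {z : ℂ} (hz : z ≠ 0) :
    HasFDerivAt (fun w => (Lg w : ℂ)) (-(‖z‖ ^ 2 : ℂ)⁻¹ • ofRealCLM.comp (innerSL ℝ z)) z := by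
  refine (ofRealCLM.hasFDerivAt.comp z ((hasFDerivAt_log_norm hz).const_sub 1)).congr_fderiv ?_
  ext w; simp; ring

lemma wirtinger_fderiv_fEx {z : ℂ} (hz : z ≠ 0) (hL : Lg z ≠ 0) :
    wirtinger (fderiv ℝ fEx z) = gEx z := by
  have hzL : z * (Lg z : ℂ) ≠ 0 := mul_ne_zero hz (ofReal_ne_zero.2 hL)
  have hD : HasFDerivAt fEx _ z :=
    (hasDerivAt_inv hzL).comp_hasFDerivAt z ((hasFDerivAt_id z).mul (hasFDerivAt_ofReal_Lg hz))
  rw [hD.fderiv]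
  simp only [map_smul, map_add, wirtinger_id, wirtinger_ofRealCLM_comp_innerSL, id, smul_eq_mul]
  have hn : (‖z‖ ^ 2 : ℂ) = z * conj z := by rw [mul_conj, normSq_eq_norm_sq]; push_cast; rfl
  have hc : conj z ≠ 0 := by simpa using hz
  rw [hn, gEx]
  push_cast
  field_simp
  ring

lemma one_lt_Lg {z : ℂ} (h0 : 0 < ‖z‖) (h1 : ‖z‖ < 1) : 1 < Lg z := by
  have := Real.log_neg h0 h1
  rw [Lg]; linarith

lemma inv_le_norm_gEx {z : ℂ} (h0 : 0 < ‖z‖) (h1 : ‖z‖ < 1) :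
    (2 * ‖z‖ ^ 2 * Lg z)⁻¹ ≤ ‖gEx z‖ := by
  have hL := one_lt_Lg h0 h1
  have hz : z ≠ 0 := norm_pos_iff.1 h0
  have hg : gEx z = -(((2 * Lg z - 1) / (2 * Lg z ^ 2) : ℝ) : ℂ) / z ^ 2 := by
    have : (Lg z : ℂ) ≠ 0 := ofReal_ne_zero.2 (by positivity)
    rw [gEx]; push_cast; field_simp; ring
  rw [hg, norm_div, norm_neg, norm_real, Real.norm_of_nonneg (div_nonneg (by linarith) (by positivity)),
    norm_pow, div_div, ← one_div, div_le_div_iff₀ (by positivity) (by positivity)]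
  nlinarith [mul_pos (mul_pos (pow_pos h0 2) (by linarith : 0 < Lg z)) (by linarith : 0 < Lg z - 1)]

lemma Lg_le_of_pow_le_norm {r : ℝ} (hr : 0 < r) (k : ℕ) {z : ℂ} (hz : r ^ k ≤ ‖z‖) :
    Lg z ≤ 1 - k * Real.log r := by
  have := Real.log_le_log (by positivity) hz
  rw [Real.log_pow] at this
  rw [Lg]; linarith

lemma Complex.volume_preimage_norm_Ico {a b : ℝ} (ha : 0 ≤ a) (hab : a ≤ b) :
    volume (norm ⁻¹' Set.Ico a b : Set ℂ) = ENNReal.ofReal ((b ^ 2 - a ^ 2) * Real.pi) := by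
  have hA : (norm ⁻¹' Set.Ico a b : Set ℂ) = Metric.ball 0 b \ Metric.ball 0 a := by
    ext z; simp [and_comm]
  rw [hA, measure_sdiff (Metric.ball_subset_ball hab) measurableSet_ball.nullMeasurableSet
    (by simp [ENNReal.mul_eq_top]), Complex.volume_ball, Complex.volume_ball,
    ← ENNReal.sub_mul (fun _ _ => ENNReal.coe_ne_top), ← ENNReal.ofReal_pow ha,
    ← ENNReal.ofReal_pow (ha.trans hab), ← ENNReal.ofReal_sub _ (by positivity),
    ← ENNReal.ofReal_coe_nnreal, NNReal.coe_real_pi, ← ENNReal.ofReal_mul (by nlinarith)]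

lemma ENNReal.tsum_ofReal_div_add_eq_top {c a : ℝ} (hc : 0 < c) (ha : 0 < a) :
    ∑' n : ℕ, ENNReal.ofReal (c / (n + a)) = ∞ := by
  refine ENNReal.tsum_coe_eq_top_iff_not_summable_coe.2 fun h => ?_
  have h' : Summable fun n : ℕ => 1 / |n + a| ^ (1 : ℝ) := by
    refine (h.mul_left c⁻¹).congr fun n => ?_
    have : 0 < (n : ℝ) + a := by positivity
    rw [Real.coe_toNNReal _ (by positivity), abs_of_pos this, Real.rpow_one]
    field_simp
  exact absurd ((Real.summable_one_div_nat_add_rpow a 1).1 h') (lt_irrefl 1)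

lemma ofReal_div_le_setLIntegral_nnnorm_gEx_annulus {r : ℝ} (hr0 : 0 < r) (hr1 : r < 1) (n : ℕ) :
    ENNReal.ofReal (Real.pi * (1 - r ^ 2) / (2 * (1 - Real.log r)) / (n + 2)) ≤
      ∫⁻ z in norm ⁻¹' Set.Ico (r ^ (n + 2)) (r ^ (n + 1)), ‖gEx z‖₊ := by
  have hℓ : 0 < 1 - Real.log r := by linarith [Real.log_neg hr0 hr1]
  set m := (2 * (r ^ (n + 1)) ^ 2 * ((n + 2) * (1 - Real.log r)))⁻¹ with hm_def
  have hbound : ∀ z ∈ (norm ⁻¹' Set.Ico (r ^ (n + 2)) (r ^ (n + 1)) : Set ℂ),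
      ENNReal.ofReal m ≤ ‖gEx z‖₊ := by
    rintro z ⟨hlo, hhi⟩
    have h0 : 0 < ‖z‖ := (pow_pos hr0 _).trans_le hlo
    have hL : Lg z ≤ (n + 2) * (1 - Real.log r) := by
      have := Lg_le_of_pow_le_norm hr0 (n + 2) hlo
      push_cast at this
      nlinarith
    have h1 : ‖z‖ < 1 := hhi.trans (pow_lt_one₀ hr0.le hr1 n.succ_ne_zero)
    have hm : m ≤ (2 * ‖z‖ ^ 2 * Lg z)⁻¹ := by
      have := one_lt_Lg h0 h1
      apply inv_anti₀ (by positivity)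
      gcongr
    exact (ENNReal.ofReal_le_ofReal (hm.trans (inv_le_norm_gEx h0 h1))).trans_eq (ofReal_norm _)
  calc ENNReal.ofReal (Real.pi * (1 - r ^ 2) / (2 * (1 - Real.log r)) / (n + 2))
      = ENNReal.ofReal m * ENNReal.ofReal (((r ^ (n + 1)) ^ 2 - (r ^ (n + 2)) ^ 2) * Real.pi) := by
        rw [← ENNReal.ofReal_mul (by positivity)]
        congr 1
        rw [hm_def]
        field_simp
        ring
    _ = ∫⁻ _ in norm ⁻¹' Set.Ico (r ^ (n + 2)) (r ^ (n + 1)), ENNReal.ofReal m := by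
        rw [setLIntegral_const, Complex.volume_preimage_norm_Ico (by positivity)
          (pow_le_pow_of_le_one hr0.le hr1.le (by omega))]
    _ ≤ _ := setLIntegral_mono' (measurableSet_Ico.preimage measurable_norm) hbound

lemma lintegral_nnnorm_gEx_punctured_ball_eq_top {r : ℝ} (hr0 : 0 < r) (hr1 : r < 1) :
    ∫⁻ z in {z : ℂ | 0 < ‖z‖ ∧ ‖z‖ < r}, ‖gEx z‖₊ = ∞ := by
  set A : ℕ → Set ℂ := fun n => norm ⁻¹' Set.Ico (r ^ (n + 2)) (r ^ (n + 1))
  have hA_meas (n : ℕ) : MeasurableSet (A n) := measurableSet_Ico.preimage measurable_norm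
  have hA_disj : Pairwise (Disjoint on A) := by
    refine (pairwise_disjoint_on A).2 fun m n hmn => Set.disjoint_left.2 fun z hm hn => ?_
    have := pow_le_pow_of_le_one hr0.le hr1.le (show m + 2 ≤ n + 1 by omega)
    exact hn.2.not_ge (this.trans hm.1)
  have hA_sub (n : ℕ) : A n ⊆ {z : ℂ | 0 < ‖z‖ ∧ ‖z‖ < r} := fun z ⟨hlo, hhi⟩ =>
    ⟨(pow_pos hr0 _).trans_le hlo, hhi.trans_le (pow_le_of_le_one hr0.le hr1.le n.succ_ne_zero)⟩
  have hc : 0 < Real.pi * (1 - r ^ 2) / (2 * (1 - Real.log r)) := by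
    have := Real.log_neg hr0 hr1
    have : r ^ 2 < 1 := pow_lt_one₀ hr0.le hr1 two_ne_zero
    have := Real.pi_pos
    apply div_pos <;> nlinarith
  refine eq_top_iff.2 ?_
  calc ∞ = ∑' n : ℕ, ENNReal.ofReal (Real.pi * (1 - r ^ 2) / (2 * (1 - Real.log r)) / (n + 2)) :=
        (ENNReal.tsum_ofReal_div_add_eq_top hc two_pos).symm
    _ ≤ ∑' n, ∫⁻ z in A n, ‖gEx z‖₊ :=
        ENNReal.tsum_le_tsum (ofReal_div_le_setLIntegral_nnnorm_gEx_annulus hr0 hr1)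
    _ = ∫⁻ z in ⋃ n, A n, ‖gEx z‖₊ := (lintegral_iUnion hA_meas hA_disj _).symm
    _ ≤ _ := lintegral_mono_set (Set.iUnion_subset hA_sub)

/-- `g = ∂f/∂z` on the punctured unit disc, where
`f(z) = 1/(z log(e/|z|))`, and `g` is not Lebesgue integrable on any punctured
neighbourhood of the origin. -/
theorem statement14 :
    (∀ z : ℂ, 0 < ‖z‖ → ‖z‖ < 1 →
      (1/2 : ℂ) * ((fderiv ℝ fEx z) 1 - Complex.I * (fderiv ℝ fEx z) Complex.I) = gEx z) ∧
    ∀ r : ℝ, 0 < r → r < 1 →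
      ∫⁻ z in {z : ℂ | 0 < ‖z‖ ∧ ‖z‖ < r}, ‖gEx z‖₊ = ⊤ :=
  ⟨fun _ h0 h1 => wirtinger_fderiv_fEx (norm_pos_iff.1 h0) (zero_lt_one.trans (one_lt_Lg h0 h1)).ne',
    fun _ hr0 hr1 => lintegral_nnnorm_gEx_punctured_ball_eq_top hr0 hr1⟩
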